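/- arXiv:1408.2208 — 2 statements merged into one kernel-verified Lean document; each statement's English description precedes it below -/
import Mathlib

section
/- Let Q be an m×ℓ matrix with orthonormal columns, 1 ≤ k ≤ ℓ, let A_k be the rank-k truncated SVD of A, and let B_k be the rank-k truncated SVD of QᵀA. Then ‖A − QB_k‖_F² ≤ ‖(I − QQᵀ)A_k‖_F² + Σ_{j=k+1}^n σ_j², where σ_j are the singular values of A. -/
open Matrix

noncomputable def frobNorm {m n : ℕ} (A : Matrix (Fin m) (Fin n) ℝ) : ℝ :=
  Real.sqrt (∑ i, ∑ j, (A i j) ^ 2)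

noncomputable def specNorm {m n : ℕ} (A : Matrix (Fin m) (Fin n) ℝ) : ℝ :=
  ‖(Matrix.toEuclideanLin A).toContinuousLinearMap‖

/-- The `j`-th largest singular value of `A` (0-indexed). -/
noncomputable def sv {m n : ℕ} (A : Matrix (Fin m) (Fin n) ℝ) (j : Fin n) : ℝ :=
  Real.sqrt
    (((show (Aᵀ * A).IsHermitian by simpa using Matrix.isHermitian_conjTranspose_mul_self A).eigenvalues ∘
        Tuple.sort (show (Aᵀ * A).IsHermitian by simpa using Matrix.isHermitian_conjTranspose_mul_self A).eigenvalues)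
      j.rev)

/-!
With `P = 1 - Q Qᵀ`, the error splits orthogonally as `‖A - Q B_k‖² = ‖P A‖² + ‖Qᵀ A - B_k‖²`,
and `‖P A‖² = ‖P A_k‖² + ‖P (A - A_k)‖²` because `A_k` and `A - A_k` live on disjoint sets of
right singular vectors. By Eckart–Young, `B_k` approximates `Qᵀ A` at least as well as the rank-`k`
matrix `Qᵀ A_k`, so `‖Qᵀ A - B_k‖² ≤ ‖Qᵀ (A - A_k)‖²`, and
`‖P (A - A_k)‖² + ‖Qᵀ (A - A_k)‖² = ‖A - A_k‖² = ∑_{j ≥ k} σ_j²`.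

For Eckart–Young, project the columns onto the orthogonal complement of the column space `K` of
the competitor `R`: the error is at least `∑ σ_i² s_i` with `s_i = ‖P_{K⊥} w_i‖² ∈ [0, 1]` and,
by Bessel, `∑ (1 - s_i) ≤ dim K ≤ k`; since `σ` is antitone this is at least `∑_{i ≥ k} σ_i²`.
-/

open Finset
open scoped RealInnerProductSpace

section Frobenius

variable {a b c : ℕ}

theorem frobNorm_sq_eq_trace (X : Matrix (Fin a) (Fin b) ℝ) : frobNorm X ^ 2 = trace (Xᵀ * X) := by
  rw [frobNorm, Real.sq_sqrt (by positivity), trace, Finset.sum_comm]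
  simp [mul_apply, sq]

theorem frobNorm_add_sq_of_trace_eq_zero {X Y : Matrix (Fin a) (Fin b) ℝ}
    (h : trace (Xᵀ * Y) = 0) : frobNorm (X + Y) ^ 2 = frobNorm X ^ 2 + frobNorm Y ^ 2 := by
  have hYX : trace (Yᵀ * X) = 0 := by rw [← trace_transpose, transpose_mul, transpose_transpose, h]
  simp only [frobNorm_sq_eq_trace, transpose_add, Matrix.add_mul, Matrix.mul_add, trace_add, h, hYX]
  ring

theorem frobNorm_mul_sq_of_orthonormal {Q : Matrix (Fin a) (Fin b) ℝ} (hQ : Qᵀ * Q = 1)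
    (X : Matrix (Fin b) (Fin c) ℝ) : frobNorm (Q * X) ^ 2 = frobNorm X ^ 2 := by
  rw [frobNorm_sq_eq_trace, frobNorm_sq_eq_trace, transpose_mul, Matrix.mul_assoc,
    ← Matrix.mul_assoc Qᵀ, hQ, Matrix.one_mul]

theorem frobNorm_mul_transpose_sq_of_orthonormal {V : Matrix (Fin c) (Fin b) ℝ}
    (hV : Vᵀ * V = 1) (X : Matrix (Fin a) (Fin b) ℝ) : frobNorm (X * Vᵀ) ^ 2 = frobNorm X ^ 2 := by
  rw [frobNorm_sq_eq_trace, frobNorm_sq_eq_trace, transpose_mul, transpose_transpose,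
    Matrix.mul_assoc, trace_mul_comm V, Matrix.mul_assoc, Matrix.mul_assoc, hV, Matrix.mul_one]

theorem frobNorm_diagonal_sq (d : Fin a → ℝ) : frobNorm (diagonal d) ^ 2 = ∑ i, d i ^ 2 := by
  rw [frobNorm_sq_eq_trace, diagonal_transpose, diagonal_mul_diagonal, trace_diagonal]
  simp only [sq]

theorem frobNorm_svd_sq {U : Matrix (Fin a) (Fin c) ℝ} {V : Matrix (Fin b) (Fin c) ℝ}
    (hU : Uᵀ * U = 1) (hV : Vᵀ * V = 1) (d : Fin c → ℝ) :
    frobNorm (U * diagonal d * Vᵀ) ^ 2 = ∑ i, d i ^ 2 := by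
  rw [frobNorm_mul_transpose_sq_of_orthonormal hV, frobNorm_mul_sq_of_orthonormal hU,
    frobNorm_diagonal_sq]

theorem frobNorm_sq_eq_add_frobNorm_sq_projection {Q : Matrix (Fin a) (Fin b) ℝ} (hQ : Qᵀ * Q = 1)
    (X : Matrix (Fin a) (Fin c) ℝ) :
    frobNorm X ^ 2 = frobNorm ((1 - Q * Qᵀ) * X) ^ 2 + frobNorm (Qᵀ * X) ^ 2 := by
  have hcross : trace (((1 - Q * Qᵀ) * X)ᵀ * (Q * (Qᵀ * X))) = 0 := by
    have : (1 - Q * Qᵀ)ᵀ * Q = 0 := by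
      rw [transpose_sub, transpose_one, transpose_mul, transpose_transpose, Matrix.sub_mul,
        Matrix.one_mul, Matrix.mul_assoc, hQ, Matrix.mul_one, sub_self]
    rw [transpose_mul, Matrix.mul_assoc, ← Matrix.mul_assoc _ Q, this, Matrix.zero_mul,
      Matrix.mul_zero, trace_zero]
  rw [← frobNorm_mul_sq_of_orthonormal hQ (Qᵀ * X), ← frobNorm_add_sq_of_trace_eq_zero hcross,
    ← Matrix.mul_assoc, ← Matrix.add_mul, sub_add_cancel, Matrix.one_mul]

theorem trace_transpose_mul_eq_zero_of_mul_eq_zero (X Y : Matrix (Fin a) (Fin c) ℝ)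
    {V : Matrix (Fin b) (Fin c) ℝ} (hV : Vᵀ * V = 1) {d e : Fin c → ℝ} (hde : ∀ i, d i * e i = 0) :
    trace ((X * diagonal d * Vᵀ)ᵀ * (Y * diagonal e * Vᵀ)) = 0 := by
  have : (X * diagonal d * Vᵀ)ᵀ * (Y * diagonal e * Vᵀ)
      = V * (diagonal d * (Xᵀ * Y) * diagonal e * Vᵀ) := by
    simp only [transpose_mul, transpose_transpose, diagonal_transpose, Matrix.mul_assoc]
  rw [this, trace_mul_comm, Matrix.mul_assoc, hV, Matrix.mul_one, trace]
  refine Finset.sum_eq_zero fun i _ => ?_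
  simp only [Matrix.diag, mul_diagonal, diagonal_mul]
  rw [mul_right_comm, hde, zero_mul]

end Frobenius

section Truncation

variable {r : ℕ}

theorem svd_sub_truncate {a b : ℕ} (U : Matrix (Fin a) (Fin r) ℝ) (V : Matrix (Fin b) (Fin r) ℝ)
    (k : ℕ) (σ : Fin r → ℝ) :
    U * diagonal σ * Vᵀ - U * diagonal (fun j : Fin r => if (j : ℕ) < k then σ j else 0) * Vᵀ
      = U * diagonal (fun j : Fin r => if (j : ℕ) < k then 0 else σ j) * Vᵀ := by
  rw [← Matrix.sub_mul, ← Matrix.mul_sub, diagonal_sub]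
  congr 3
  funext j
  split_ifs <;> ring

theorem sum_ite_lt_sq (k : ℕ) (σ : Fin r → ℝ) :
    ∑ j : Fin r, (if (j : ℕ) < k then 0 else σ j) ^ 2
      = ∑ j ∈ univ.filter (fun j : Fin r => k ≤ (j : ℕ)), σ j ^ 2 := by
  rw [sum_filter]
  refine sum_congr rfl fun j _ => ?_
  split_ifs <;> first | omega | simp

theorem rank_mul_diagonal_mul_le {a b k : ℕ} (X : Matrix (Fin a) (Fin r) ℝ)
    (Y : Matrix (Fin r) (Fin b) ℝ) {d : Fin r → ℝ} (hd : ∀ j : Fin r, k ≤ (j : ℕ) → d j = 0) :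
    (X * diagonal d * Y).rank ≤ k := by
  classical
  calc (X * diagonal d * Y).rank ≤ (diagonal d).rank :=
        (rank_mul_le_left _ _).trans (rank_mul_le_right _ _)
    _ = Fintype.card {j // d j ≠ 0} := rank_diagonal d
    _ ≤ Fintype.card (Fin k) :=
        Fintype.card_le_of_injective (fun j => ⟨j.1, not_le.1 fun h => j.2 (hd _ h)⟩)
          fun i j h => by simpa [Fin.ext_iff, Subtype.ext_iff] using h
    _ = k := Fintype.card_fin k

theorem sum_filter_le_sum_mul_of_antitone {k : ℕ} {a s : Fin r → ℝ} (ha : Antitone a)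
    (ha0 : ∀ j, 0 ≤ a j) (hs0 : ∀ j, 0 ≤ s j) (hs1 : ∀ j, s j ≤ 1)
    (hs : ∑ j, (1 - s j) ≤ k) :
    ∑ j ∈ univ.filter (fun j : Fin r => k ≤ (j : ℕ)), a j ≤ ∑ j, a j * s j := by
  rcases le_or_gt r k with hrk | hkr
  · rw [filter_false_of_mem fun j _ => not_le.2 (j.2.trans_le hrk), sum_empty]
    exact sum_nonneg fun j _ => mul_nonneg (ha0 j) (hs0 j)
  -- Compare every `a j` with the threshold value `c = a k`.
  set c := a ⟨k, hkr⟩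
  have key : ∀ j : Fin r, a j * ((if k ≤ (j : ℕ) then 1 else 0) - s j)
      ≤ c * ((1 - s j) - if (j : ℕ) < k then 1 else 0) := by
    intro j
    by_cases hj : k ≤ (j : ℕ)
    · have : a j ≤ c := ha (Fin.le_def.2 hj)
      simp only [hj, if_true, not_lt.2 hj, if_false, sub_zero]
      exact mul_le_mul_of_nonneg_right this (by linarith [hs1 j])
    · have : c ≤ a j := ha (Fin.le_def.2 (not_le.1 hj).le)
      simp only [hj, if_false, not_le.1 hj, if_true]
      linarith [mul_le_mul_of_nonneg_right this (hs0 j)]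
  have hcard : ∑ j : Fin r, (if (j : ℕ) < k then (1 : ℝ) else 0) = k := by
    rw [sum_boole, Fin.card_filter_val_lt, min_eq_right hkr.le]
  have hlhs : ∑ j : Fin r, a j * ((if k ≤ (j : ℕ) then 1 else 0) - s j)
      = ∑ j ∈ univ.filter (fun j : Fin r => k ≤ (j : ℕ)), a j - ∑ j, a j * s j := by
    simp only [mul_sub, mul_ite, mul_one, mul_zero, sum_sub_distrib, ← sum_filter]
  have hrhs : ∑ j : Fin r, c * ((1 - s j) - if (j : ℕ) < k then 1 else 0)
      = c * (∑ j, (1 - s j) - k) := by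
    rw [← mul_sum, sum_sub_distrib, hcard]
  have hsum := sum_le_sum fun j (_ : j ∈ univ) => key j
  rw [hlhs, hrhs] at hsum
  linarith [mul_nonneg (ha0 ⟨k, hkr⟩) (sub_nonneg.2 hs)]

end Truncation

section Projection

variable {E : Type*} [NormedAddCommGroup E] [InnerProductSpace ℝ E]

theorem sum_norm_sum_smul_sq {n r : ℕ} {V : Matrix (Fin n) (Fin r) ℝ} (hV : Vᵀ * V = 1)
    (x : Fin r → E) : ∑ j, ‖∑ i, V j i • x i‖ ^ 2 = ∑ i, ‖x i‖ ^ 2 := by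
  simp only [← real_inner_self_eq_norm_sq, sum_inner, inner_sum, real_inner_smul_left,
    real_inner_smul_right]
  have hV' : ∀ i i', ∑ j, V j i * V j i' = if i = i' then 1 else 0 := fun i i' => by
    simpa [mul_apply, one_apply] using congrFun (congrFun hV i) i'
  calc ∑ j, ∑ i, ∑ i', V j i * (V j i' * ⟪x i', x i⟫)
      = ∑ i, ∑ i', (∑ j, V j i * V j i') * ⟪x i', x i⟫ := by
        rw [sum_comm]
        refine sum_congr rfl fun i _ => ?_
        rw [sum_comm]
        simp only [sum_mul, mul_assoc]
    _ = ∑ i, ⟪x i, x i⟫ := by simp [hV']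

theorem sum_norm_starProjection_sq_le_finrank (K : Submodule ℝ E) [FiniteDimensional ℝ K]
    {ι : Type*} [Fintype ι] {w : ι → E} (hw : Orthonormal ℝ w) :
    ∑ j, ‖K.starProjection (w j)‖ ^ 2 ≤ Module.finrank ℝ K := by
  let b := stdOrthonormalBasis ℝ K
  have hparseval : ∀ v : E, ‖K.starProjection v‖ ^ 2 = ∑ i, ⟪v, b i⟫ ^ 2 := fun v => by
    rw [K.starProjection_apply, Submodule.norm_coe, ← b.sum_sq_norm_inner_right]
    refine sum_congr rfl fun i _ => ?_
    rw [K.inner_orthogonalProjectionOnto_eq_of_mem_left, real_inner_comm, Real.norm_eq_abs, sq_abs]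
  have hbessel : ∀ i, ∑ j, ⟪w j, b i⟫ ^ 2 ≤ 1 := fun i => by
    have := hw.sum_inner_products_le (b i : E) (s := univ)
    rw [Submodule.norm_coe, b.orthonormal.1 i, one_pow] at this
    simpa [Real.norm_eq_abs, sq_abs, real_inner_comm] using this
  calc ∑ j, ‖K.starProjection (w j)‖ ^ 2 = ∑ i, ∑ j, ⟪w j, b i⟫ ^ 2 := by
        simp only [hparseval]
        exact sum_comm
    _ ≤ ∑ _i : Fin (Module.finrank ℝ K), (1 : ℝ) := sum_le_sum fun i _ => hbessel i
    _ = Module.finrank ℝ K := by simp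

end Projection

section EckartYoung

variable {l n r : ℕ}

def colVec (X : Matrix (Fin l) (Fin n) ℝ) (j : Fin n) : EuclideanSpace ℝ (Fin l) :=
  WithLp.toLp 2 (X.col j)

theorem frobNorm_sq_eq_sum_norm_colVec_sq (X : Matrix (Fin l) (Fin n) ℝ) :
    frobNorm X ^ 2 = ∑ j, ‖colVec X j‖ ^ 2 := by
  rw [frobNorm, Real.sq_sqrt (by positivity), sum_comm]
  simp [colVec, EuclideanSpace.norm_sq_eq]

theorem colVec_sub (X Y : Matrix (Fin l) (Fin n) ℝ) (j : Fin n) :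
    colVec (X - Y) j = colVec X j - colVec Y j := rfl

theorem orthonormal_colVec {W : Matrix (Fin l) (Fin r) ℝ} (hW : Wᵀ * W = 1) :
    Orthonormal ℝ (colVec W) := by
  rw [orthonormal_iff_ite]
  intro i j
  rw [← one_apply, ← hW]
  simp [colVec, PiLp.inner_apply, mul_apply, mul_comm]

theorem colVec_svd (W : Matrix (Fin l) (Fin r) ℝ) (V : Matrix (Fin n) (Fin r) ℝ) (σ : Fin r → ℝ)
    (j : Fin n) : colVec (W * diagonal σ * Vᵀ) j = ∑ i, V j i • σ i • colVec W i := by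
  ext a
  simp [colVec, mul_apply (M := W * diagonal σ), mul_diagonal, mul_comm, mul_left_comm]

theorem finrank_span_colVec (R : Matrix (Fin l) (Fin n) ℝ) :
    Module.finrank ℝ (Submodule.span ℝ (Set.range (colVec R))) = R.rank := by
  have : Set.range (colVec R) = (WithLp.linearEquiv 2 ℝ (Fin l → ℝ)).symm '' Set.range R.col := by
    rw [← Set.range_comp]; rfl
  rw [rank_eq_finrank_span_cols, this, ← LinearEquiv.coe_coe,
    ← Submodule.map_span, LinearEquiv.finrank_map_eq]

theorem sum_sq_le_frobNorm_sub_sq_of_rank_le {W : Matrix (Fin l) (Fin r) ℝ}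
    {V : Matrix (Fin n) (Fin r) ℝ} (hW : Wᵀ * W = 1) (hV : Vᵀ * V = 1) {σ : Fin r → ℝ}
    (hσ : Antitone σ) (hσ0 : ∀ j, 0 ≤ σ j) {k : ℕ} {R : Matrix (Fin l) (Fin n) ℝ}
    (hR : R.rank ≤ k) :
    ∑ j ∈ univ.filter (fun j : Fin r => k ≤ (j : ℕ)), σ j ^ 2
      ≤ frobNorm (W * diagonal σ * Vᵀ - R) ^ 2 := by
  set K := Submodule.span ℝ (Set.range (colVec R))
  set w := colVec W with hw_def
  have hw : Orthonormal ℝ w := orthonormal_colVec hW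
  have hpyth : ∀ i, ‖K.starProjection (w i)‖ ^ 2 + ‖Kᗮ.starProjection (w i)‖ ^ 2 = 1 := fun i => by
    rw [← K.norm_sq_eq_add_norm_sq_starProjection, hw.1 i, one_pow]
  have hrank : ∑ i, (1 - ‖Kᗮ.starProjection (w i)‖ ^ 2) ≤ (k : ℝ) :=
    calc ∑ i, (1 - ‖Kᗮ.starProjection (w i)‖ ^ 2)
        = ∑ i, ‖K.starProjection (w i)‖ ^ 2 :=
          sum_congr rfl fun i _ => by linarith [hpyth i]
      _ ≤ Module.finrank ℝ K := sum_norm_starProjection_sq_le_finrank K hw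
      _ ≤ k := by rw [finrank_span_colVec]; exact_mod_cast hR
  have hcol : ∀ j, ‖Kᗮ.starProjection (colVec (W * diagonal σ * Vᵀ) j)‖
      ≤ ‖colVec (W * diagonal σ * Vᵀ - R) j‖ := fun j => by
    have hRj : Kᗮ.starProjection (colVec R j) = 0 :=
      Submodule.starProjection_orthogonal_apply_eq_zero (Submodule.subset_span ⟨j, rfl⟩)
    rw [colVec_sub, ← sub_zero (Kᗮ.starProjection _), ← hRj, ← map_sub]
    exact Kᗮ.norm_starProjection_apply_le _
  calc ∑ j ∈ univ.filter (fun j : Fin r => k ≤ (j : ℕ)), σ j ^ 2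
      ≤ ∑ i, σ i ^ 2 * ‖Kᗮ.starProjection (w i)‖ ^ 2 :=
        sum_filter_le_sum_mul_of_antitone
          (fun i j hij => pow_le_pow_left₀ (hσ0 j) (hσ hij) 2) (fun i => sq_nonneg _)
          (fun i => sq_nonneg _)
          (fun i => by linarith [hpyth i, sq_nonneg ‖K.starProjection (w i)‖]) hrank
    _ = ∑ j, ‖Kᗮ.starProjection (colVec (W * diagonal σ * Vᵀ) j)‖ ^ 2 := by
        simp only [colVec_svd, ← hw_def, map_sum, map_smul, sum_norm_sum_smul_sq hV, norm_smul,
          Real.norm_eq_abs, mul_pow, sq_abs]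
    _ ≤ ∑ j, ‖colVec (W * diagonal σ * Vᵀ - R) j‖ ^ 2 :=
        sum_le_sum fun j _ => pow_le_pow_left₀ (norm_nonneg _) (hcol j) 2
    _ = frobNorm (W * diagonal σ * Vᵀ - R) ^ 2 := (frobNorm_sq_eq_sum_norm_colVec_sq _).symm

end EckartYoung

theorem stmt6_general {m n l k : ℕ}
    (A Ak U : Matrix (Fin m) (Fin n) ℝ) (V : Matrix (Fin n) (Fin n) ℝ)
    (σ : Fin n → ℝ) (hU : Uᵀ * U = 1) (hV : Vᵀ * V = 1)
    (hA : A = U * Matrix.diagonal σ * Vᵀ)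
    (hAk : Ak = U * Matrix.diagonal (fun j : Fin n => if (j : ℕ) < k then σ j else 0) * Vᵀ)
    (Q : Matrix (Fin m) (Fin l) ℝ) (hQ : Qᵀ * Q = 1)
    (W : Matrix (Fin l) (Fin (min l n)) ℝ) (V' : Matrix (Fin n) (Fin (min l n)) ℝ)
    (σ' : Fin (min l n) → ℝ) (hW : Wᵀ * W = 1) (hV' : V'ᵀ * V' = 1)
    (hσ'anti : Antitone σ') (hσ'0 : ∀ j, 0 ≤ σ' j)
    (hQA : Qᵀ * A = W * Matrix.diagonal σ' * V'ᵀ)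
    (Bk : Matrix (Fin l) (Fin n) ℝ)
    (hBk : Bk = W * Matrix.diagonal (fun j : Fin (min l n) => if (j : ℕ) < k then σ' j else 0) * V'ᵀ) :
    frobNorm (A - Q * Bk) ^ 2 ≤ frobNorm ((1 - Q * Qᵀ) * Ak) ^ 2 +
      ∑ j ∈ Finset.univ.filter (fun j : Fin n => k ≤ (j : ℕ)), σ j ^ 2 := by
  have hPQ : (1 - Q * Qᵀ) * Q = 0 := by
    rw [Matrix.sub_mul, Matrix.one_mul, Matrix.mul_assoc, hQ, Matrix.mul_one, sub_self]
  have hAtail : A - Ak = U * diagonal (fun j : Fin n => if (j : ℕ) < k then 0 else σ j) * Vᵀ := by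
    rw [hA, hAk, svd_sub_truncate]
  have hsplit : frobNorm (A - Q * Bk) ^ 2
      = frobNorm ((1 - Q * Qᵀ) * A) ^ 2 + frobNorm (Qᵀ * A - Bk) ^ 2 := by
    rw [frobNorm_sq_eq_add_frobNorm_sq_projection hQ, Matrix.mul_sub, Matrix.mul_sub,
      ← Matrix.mul_assoc, ← Matrix.mul_assoc, hPQ, hQ, Matrix.zero_mul, sub_zero, Matrix.one_mul]
  have hPA : frobNorm ((1 - Q * Qᵀ) * A) ^ 2
      = frobNorm ((1 - Q * Qᵀ) * Ak) ^ 2 + frobNorm ((1 - Q * Qᵀ) * (A - Ak)) ^ 2 := by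
    rw [← frobNorm_add_sq_of_trace_eq_zero, ← Matrix.mul_add, add_sub_cancel]
    have hassoc (D : Matrix (Fin n) (Fin n) ℝ) :
        (1 - Q * Qᵀ) * (U * D * Vᵀ) = (1 - Q * Qᵀ) * U * D * Vᵀ := by
      simp only [Matrix.mul_assoc]
    rw [hAtail, hAk, hassoc, hassoc]
    exact trace_transpose_mul_eq_zero_of_mul_eq_zero _ _ hV fun j => by split_ifs <;> simp
  have hBtail : frobNorm (Qᵀ * A - Bk) ^ 2 ≤ frobNorm (Qᵀ * (A - Ak)) ^ 2 := by
    have hrank : (Qᵀ * Ak).rank ≤ k := by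
      rw [hAk, ← Matrix.mul_assoc, ← Matrix.mul_assoc]
      exact rank_mul_diagonal_mul_le _ _ fun j hj => if_neg (not_lt.2 hj)
    rw [hBk, hQA, svd_sub_truncate, frobNorm_svd_sq hW hV', sum_ite_lt_sq, Matrix.mul_sub, hQA]
    exact sum_sq_le_frobNorm_sub_sq_of_rank_le hW hV' hσ'anti hσ'0 hrank
  have htail := frobNorm_sq_eq_add_frobNorm_sq_projection hQ (A - Ak)
  rw [hAtail, frobNorm_svd_sq hU hV, sum_ite_lt_sq, ← hAtail] at htail
  linarith

theorem stmt6 {m n l k : ℕ} (hmn : n ≤ m) (hk : 1 ≤ k) (hkl : k ≤ l) (hkn : k < n)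
    (A Ak U : Matrix (Fin m) (Fin n) ℝ) (V : Matrix (Fin n) (Fin n) ℝ)
    (σ : Fin n → ℝ) (hU : Uᵀ * U = 1) (hV : Vᵀ * V = 1)
    (hσanti : Antitone σ) (hσ0 : ∀ j, 0 ≤ σ j)
    (hA : A = U * Matrix.diagonal σ * Vᵀ)
    (hAk : Ak = U * Matrix.diagonal (fun j : Fin n => if (j : ℕ) < k then σ j else 0) * Vᵀ)
    (Q : Matrix (Fin m) (Fin l) ℝ) (hQ : Qᵀ * Q = 1)
    (W : Matrix (Fin l) (Fin (min l n)) ℝ) (V' : Matrix (Fin n) (Fin (min l n)) ℝ)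
    (σ' : Fin (min l n) → ℝ) (hW : Wᵀ * W = 1) (hV' : V'ᵀ * V' = 1)
    (hσ'anti : Antitone σ') (hσ'0 : ∀ j, 0 ≤ σ' j)
    (hQA : Qᵀ * A = W * Matrix.diagonal σ' * V'ᵀ)
    (Bk : Matrix (Fin l) (Fin n) ℝ)
    (hBk : Bk = W * Matrix.diagonal (fun j : Fin (min l n) => if (j : ℕ) < k then σ' j else 0) * V'ᵀ) :
    frobNorm (A - Q * Bk) ^ 2 ≤ frobNorm ((1 - Q * Qᵀ) * Ak) ^ 2 +
      ∑ j ∈ Finset.univ.filter (fun j : Fin n => k ≤ (j : ℕ)), σ j ^ 2 :=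
  stmt6_general A Ak U V σ hU hV hA hAk Q hQ W V' σ' hW hV' hσ'anti hσ'0 hQA Bk hBk
end

section
/- Let A be an m×n real matrix with singular values σ_1 ≥ ... ≥ σ_n, and let B be a matrix of rank at most k. Then ‖A − B‖_F² ≥ σ_1²(A − B) + Σ_{i=2}^{n−k} σ_{i+k}²(A). In particular, ‖A − B‖₂² ≤ ‖A − B‖_F² − Σ_{i=k+2}^{n} σ_i²(A). -/
/-!
Let `v₁, v₂, …` be right singular vectors of `A` and `w₁, w₂, …` those of `A - B`. For `j > k`
the three subspaces `span {v₁, …, v_j}`, `ker B` and `span {w_{j-k}, …, w_n}` have dimensions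
adding up to more than `2n`, so they share a unit vector `x`. Since `Bx = 0`,
`σ_j(A)² ≤ ‖Ax‖² = ‖(A - B)x‖² ≤ σ_{j-k}(A - B)²` (Weyl). Summing over `j = k+1, …, n` and adding
`σ_1(A - B)²` bounds the left-hand side by `∑ σ_i(A - B)² = ‖A - B‖_F²`; the spectral norm is
`σ_1(A - B)`.
-/

open Matrix

open Module Submodule
open scoped InnerProductSpace

theorem Submodule.finrank_add_finrank_le_finrank_add_finrank_inf {K V : Type*} [DivisionRing K]
    [AddCommGroup V] [Module K V] [FiniteDimensional K V] (s t : Submodule K V) :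
    finrank K s + finrank K t ≤ finrank K V + finrank K ↥(s ⊓ t) := by
  rw [← s.finrank_sup_add_finrank_inf_eq t]
  exact Nat.add_le_add_right (s ⊔ t).finrank_le _

namespace OrthonormalBasis

variable {𝕜 E ι : Type*} [RCLike 𝕜] [NormedAddCommGroup E] [InnerProductSpace 𝕜 E] [Fintype ι]

theorem inner_eq_zero_of_mem_span_image (b : OrthonormalBasis ι 𝕜 E) {s : Set ι} {x : E}
    (hx : x ∈ span 𝕜 (b '' s)) {i : ι} (hi : i ∉ s) : ⟪b i, x⟫_𝕜 = 0 := by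
  rw [← b.coe_toBasis, Module.Basis.mem_span_image] at hx
  rw [← b.repr_apply_apply, ← b.coe_toBasis_repr_apply]
  by_contra h
  exact hi (hx (Finsupp.mem_support_iff.mpr h))

theorem finrank_span_image (b : OrthonormalBasis ι 𝕜 E) (s : Finset ι) :
    finrank 𝕜 (span 𝕜 (b '' s)) = s.card := by
  have hli : LinearIndependent 𝕜 fun i : (s : Set ι) => b i :=
    b.orthonormal.linearIndependent.comp _ Subtype.val_injective
  rw [Set.image_eq_range, finrank_span_eq_card hli]
  simp

end OrthonormalBasis

namespace LinearMap

variable {𝕜 : Type*} [RCLike 𝕜]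
  {E : Type*} [NormedAddCommGroup E] [InnerProductSpace 𝕜 E] [FiniteDimensional 𝕜 E]
  {F : Type*} [NormedAddCommGroup F] [InnerProductSpace 𝕜 F] [FiniteDimensional 𝕜 F]
  (T : E →ₗ[𝕜] F)

noncomputable def rightSingularBasis : OrthonormalBasis (Fin (finrank 𝕜 E)) 𝕜 E :=
  T.isSymmetric_adjoint_comp_self.eigenvectorBasis rfl

theorem norm_apply_sq_eq_sum_singularValues (x : E) :
    ‖T x‖ ^ 2 = ∑ i : Fin (finrank 𝕜 E),
      T.singularValues i ^ 2 * ‖⟪T.rightSingularBasis i, x⟫_𝕜‖ ^ 2 := by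
  have h : (‖T x‖ ^ 2 : 𝕜) = ⟪x, (adjoint T ∘ₗ T) x⟫_𝕜 := by
    rw [comp_apply, adjoint_inner_right, inner_self_eq_norm_sq_to_K]
  rw [← T.rightSingularBasis.repr.inner_map_map, PiLp.inner_apply] at h
  simp only [rightSingularBasis, T.isSymmetric_adjoint_comp_self.eigenvectorBasis_apply_self_apply,
    RCLike.inner_apply] at h
  apply RCLike.ofReal_injective (K := 𝕜)
  rw [RCLike.ofReal_pow, h]
  push_cast
  refine Finset.sum_congr rfl fun i _ => ?_
  rw [← RCLike.ofReal_pow, T.sq_singularValues_fin rfl, ← OrthonormalBasis.repr_apply_apply,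
    ← RCLike.conj_mul, rightSingularBasis]
  ring

theorem sq_singularValues_mul_norm_sq_le {i : Fin (finrank 𝕜 E)} {x : E}
    (hx : x ∈ span 𝕜 (T.rightSingularBasis '' Set.Iic i)) :
    T.singularValues i ^ 2 * ‖x‖ ^ 2 ≤ ‖T x‖ ^ 2 := by
  rw [T.norm_apply_sq_eq_sum_singularValues, ← T.rightSingularBasis.sum_sq_norm_inner_right, Finset.mul_sum]
  refine Finset.sum_le_sum fun l _ => ?_
  by_cases hl : l ≤ i
  · gcongr
    · exact T.singularValues_nonneg _
    · exact T.singularValues_antitone (by simpa using hl)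
  · simp [T.rightSingularBasis.inner_eq_zero_of_mem_span_image hx hl]

theorem norm_apply_sq_le_sq_singularValues_mul_norm_sq {i : Fin (finrank 𝕜 E)} {x : E}
    (hx : x ∈ span 𝕜 (T.rightSingularBasis '' Set.Ici i)) :
    ‖T x‖ ^ 2 ≤ T.singularValues i ^ 2 * ‖x‖ ^ 2 := by
  rw [T.norm_apply_sq_eq_sum_singularValues, ← T.rightSingularBasis.sum_sq_norm_inner_right, Finset.mul_sum]
  refine Finset.sum_le_sum fun l _ => ?_
  by_cases hl : i ≤ l
  · gcongr
    · exact T.singularValues_nonneg _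
    · exact T.singularValues_antitone (by simpa using hl)
  · simp [T.rightSingularBasis.inner_eq_zero_of_mem_span_image hx hl]

theorem opNorm_le_singularValues_zero :
    ‖T.toContinuousLinearMap‖ ≤ T.singularValues 0 := by
  refine ContinuousLinearMap.opNorm_le_bound _ (T.singularValues_nonneg 0) fun x => ?_
  refine le_of_sq_le_sq ?_ (mul_nonneg (T.singularValues_nonneg 0) (norm_nonneg x))
  rw [mul_pow, coe_toContinuousLinearMap', T.norm_apply_sq_eq_sum_singularValues,
    ← T.rightSingularBasis.sum_sq_norm_inner_right, Finset.mul_sum]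
  refine Finset.sum_le_sum fun l _ => ?_
  gcongr
  · exact T.singularValues_nonneg _
  · exact T.singularValues_antitone (Nat.zero_le _)

theorem singularValues_add_le_of_finrank_range_le {U : E →ₗ[𝕜] F} {k : ℕ}
    (hU : finrank 𝕜 (range U) ≤ k) (j : ℕ) :
    T.singularValues (j + k) ≤ (T - U).singularValues j := by
  by_cases! hjk : finrank 𝕜 E ≤ j + k
  · rw [T.singularValues_of_finrank_le hjk]
    exact singularValues_nonneg _ _
  set V₁ := span 𝕜 (T.rightSingularBasis '' Set.Iic ⟨j + k, hjk⟩) with hV₁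
  set V₂ := span 𝕜 ((T - U).rightSingularBasis '' Set.Ici ⟨j, by omega⟩) with hV₂
  have h₁ : finrank 𝕜 V₁ = j + k + 1 := by
    rw [hV₁, ← Finset.coe_Iic, OrthonormalBasis.finrank_span_image, Fin.card_Iic]
  have h₂ : finrank 𝕜 V₂ = finrank 𝕜 E - j := by
    rw [hV₂, ← Finset.coe_Ici, OrthonormalBasis.finrank_span_image, Fin.card_Ici]
  have hK := U.finrank_range_add_finrank_ker
  have h₁₂ := finrank_add_finrank_le_finrank_add_finrank_inf V₁ (ker U)
  have h₁₂₃ := finrank_add_finrank_le_finrank_add_finrank_inf (V₁ ⊓ ker U) V₂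
  obtain ⟨x, ⟨⟨hx₁, hxU⟩, hx₂⟩, hx⟩ : ∃ x ∈ V₁ ⊓ ker U ⊓ V₂, x ≠ 0 :=
    exists_mem_ne_zero_of_ne_bot fun h => by rw [h, finrank_bot] at h₁₂₃; omega
  have hTx : (T - U) x = T x := by simp [mem_ker.mp hxU]
  have hlow := T.sq_singularValues_mul_norm_sq_le hx₁
  have hupp := (T - U).norm_apply_sq_le_sq_singularValues_mul_norm_sq hx₂
  rw [hTx] at hupp
  refine le_of_sq_le_sq ?_ ((T - U).singularValues_nonneg j)
  exact le_of_mul_le_mul_right (hlow.trans hupp) (by positivity)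

theorem sum_Ico_sq_singularValues_le {U : E →ₗ[𝕜] F} {k : ℕ}
    (hU : finrank 𝕜 (range U) ≤ k) (a N : ℕ) :
    ∑ i ∈ Finset.Ico (a + k) N, T.singularValues i ^ 2
      ≤ ∑ i ∈ Finset.Ico a N, (T - U).singularValues i ^ 2 := by
  by_cases! hkN : N < k
  · rw [Finset.Ico_eq_empty (by omega), Finset.sum_empty]
    exact Finset.sum_nonneg fun _ _ => sq_nonneg _
  calc ∑ i ∈ Finset.Ico (a + k) N, T.singularValues i ^ 2
      = ∑ i ∈ Finset.Ico a (N - k), T.singularValues (i + k) ^ 2 := by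
        rw [Finset.sum_Ico_add' (fun i => T.singularValues i ^ 2), Nat.sub_add_cancel hkN]
    _ ≤ ∑ i ∈ Finset.Ico a (N - k), (T - U).singularValues i ^ 2 :=
        Finset.sum_le_sum fun i _ => pow_le_pow_left₀ (T.singularValues_nonneg _)
          (T.singularValues_add_le_of_finrank_range_le hU i) 2
    _ ≤ ∑ i ∈ Finset.Ico a N, (T - U).singularValues i ^ 2 :=
        Finset.sum_le_sum_of_subset_of_nonneg (Finset.Ico_subset_Ico_right (Nat.sub_le N k))
          fun _ _ _ => sq_nonneg _

theorem sum_sq_singularValues_eq_sum_norm_sq {ι : Type*} [Fintype ι] (b : OrthonormalBasis ι 𝕜 E) :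
    ∑ i ∈ Finset.range (finrank 𝕜 E), T.singularValues i ^ 2 = ∑ l, ‖T (b l)‖ ^ 2 := by
  rw [← Fin.sum_univ_eq_sum_range]
  simp only [T.sq_singularValues_fin rfl]
  rw [← T.isSymmetric_adjoint_comp_self.re_trace_eq_sum_eigenvalues rfl, trace_eq_sum_inner _ b,
    map_sum]
  refine Finset.sum_congr rfl fun l _ => ?_
  rw [comp_apply, adjoint_inner_right, inner_self_eq_norm_sq]

end LinearMap

theorem LinearMap.IsSymmetric.eigenvalues_congr {𝕜 E : Type*} [RCLike 𝕜] [NormedAddCommGroup E]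
    [InnerProductSpace 𝕜 E] [FiniteDimensional 𝕜 E] {S S' : E →ₗ[𝕜] E} (hS : S.IsSymmetric)
    (hS' : S'.IsSymmetric) (h : S = S') {N N' : ℕ} (hN : finrank 𝕜 E = N) (hN' : finrank 𝕜 E = N')
    (i : Fin N) : hS.eigenvalues hN i = hS'.eigenvalues hN' (Fin.cast (hN.symm.trans hN') i) := by
  subst h hN hN'
  rfl

theorem Tuple.comp_perm_comp_sort_eq_comp_rev {n : ℕ} {α : Type*} [LinearOrder α]
    {f : Fin n → α} (hf : Antitone f) (σ : Equiv.Perm (Fin n)) :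
    (f ∘ σ) ∘ Tuple.sort (f ∘ σ) = f ∘ Fin.rev := by
  rw [Tuple.comp_perm_comp_sort_eq_comp_sort]
  exact (Tuple.comp_sort_eq_comp_iff_monotone (σ := Fin.revPerm)).mpr
    (fun _ _ h => hf (Fin.rev_le_rev.mpr h)) |>.symm

theorem Fin.sum_filter_le_val_eq_sum_Ico {M : Type*} [AddCommMonoid M] (f : ℕ → M) (a n : ℕ) :
    ∑ j ∈ Finset.univ.filter (fun j : Fin n => a ≤ (j : ℕ)), f j = ∑ i ∈ Finset.Ico a n, f i := by
  rw [Finset.sum_filter, Fin.sum_univ_eq_sum_range (fun i => if a ≤ i then f i else 0),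
    ← Finset.sum_filter]
  congr 1
  ext i
  simp [and_comm]

namespace Matrix

variable {m n : ℕ}

theorem toEuclideanLin_transpose_mul_self (A : Matrix (Fin m) (Fin n) ℝ) :
    toEuclideanLin (Aᵀ * A) = LinearMap.adjoint (toEuclideanLin A) ∘ₗ toEuclideanLin A := by
  rw [← conjTranspose_eq_transpose_of_trivial, ← toEuclideanLin_conjTranspose_eq_adjoint]
  exact toLpLin_mul 2 2 2 _ _

theorem rank_eq_finrank_range_toEuclideanLin (B : Matrix (Fin m) (Fin n) ℝ) :
    B.rank = finrank ℝ (LinearMap.range (toEuclideanLin B)) := by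
  rw [toEuclideanLin, toLpLin_eq_toLin]
  exact B.rank_eq_finrank_range_toLin _ _

end Matrix

theorem sv_eq_singularValues {m n : ℕ} (A : Matrix (Fin m) (Fin n) ℝ) (j : Fin n) :
    sv A j = (toEuclideanLin A).singularValues j := by
  have hA : (Aᵀ * A).IsHermitian := by
    simpa using Matrix.isHermitian_conjTranspose_mul_self A
  have hn : finrank ℝ (EuclideanSpace ℝ (Fin n)) = n := finrank_euclideanSpace_fin
  set μ := (toEuclideanLin A).isSymmetric_adjoint_comp_self.eigenvalues hn
  -- The matrix API indexes the eigenvalues of `Aᵀ * A` by an arbitrary permutation of `Fin n`.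
  have hμ : hA.eigenvalues = μ ∘ (((Fintype.equivOfCardEq (Fintype.card_fin _)).symm).trans
      (finCongr (Fintype.card_fin n))) := by
    funext i
    exact LinearMap.IsSymmetric.eigenvalues_congr _ _ (toEuclideanLin_transpose_mul_self A) _ hn _
  rw [sv, (toEuclideanLin A).singularValues_fin hn j, hμ,
    Tuple.comp_perm_comp_sort_eq_comp_rev (LinearMap.IsSymmetric.eigenvalues_antitone _ hn)]
  simp

theorem frobNorm_sq_eq_sum_sq_singularValues {m n : ℕ} (M : Matrix (Fin m) (Fin n) ℝ) :
    frobNorm M ^ 2 = ∑ i ∈ Finset.range n, (toEuclideanLin M).singularValues i ^ 2 := by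
  have h := (toEuclideanLin M).sum_sq_singularValues_eq_sum_norm_sq
    (EuclideanSpace.basisFun (Fin n) ℝ)
  rw [finrank_euclideanSpace_fin] at h
  rw [h, frobNorm, Real.sq_sqrt (by positivity), Finset.sum_comm]
  refine Finset.sum_congr rfl fun l _ => ?_
  simp [EuclideanSpace.norm_sq_eq, toLpLin_apply]

theorem stmt11_general {m n k : ℕ} (hn : 0 < n)
    (A B : Matrix (Fin m) (Fin n) ℝ) (hB : B.rank ≤ k) :
    sv (A - B) ⟨0, hn⟩ ^ 2 +
      (∑ j ∈ Finset.univ.filter (fun j : Fin n => k + 1 ≤ (j : ℕ)), sv A j ^ 2)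
      ≤ frobNorm (A - B) ^ 2 ∧
    specNorm (A - B) ^ 2 ≤ frobNorm (A - B) ^ 2 -
      ∑ j ∈ Finset.univ.filter (fun j : Fin n => k + 1 ≤ (j : ℕ)), sv A j ^ 2 := by
  have htail := (toEuclideanLin A).sum_Ico_sq_singularValues_le
    (B.rank_eq_finrank_range_toEuclideanLin ▸ hB) 1 n
  rw [← map_sub, add_comm 1 k] at htail
  have hfrob : frobNorm (A - B) ^ 2 = (toEuclideanLin (A - B)).singularValues 0 ^ 2
      + ∑ i ∈ Finset.Ico 1 n, (toEuclideanLin (A - B)).singularValues i ^ 2 := by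
    rw [frobNorm_sq_eq_sum_sq_singularValues, Finset.range_eq_Ico,
      Finset.sum_eq_sum_Ico_succ_bot hn]
  have hpart : sv (A - B) ⟨0, hn⟩ ^ 2 +
      ∑ j ∈ Finset.univ.filter (fun j : Fin n => k + 1 ≤ (j : ℕ)), sv A j ^ 2
        ≤ frobNorm (A - B) ^ 2 := by
    simp only [sv_eq_singularValues]
    rw [Fin.sum_filter_le_val_eq_sum_Ico (fun i => (toEuclideanLin A).singularValues i ^ 2)]
    linarith
  have hspec : specNorm (A - B) ^ 2 ≤ sv (A - B) ⟨0, hn⟩ ^ 2 := by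
    rw [sv_eq_singularValues]
    exact pow_le_pow_left₀ (norm_nonneg _) (toEuclideanLin (A - B)).opNorm_le_singularValues_zero 2
  exact ⟨hpart, by linarith⟩

theorem stmt11 {m n k : ℕ} (hmn : n ≤ m) (hn : 0 < n)
    (A B : Matrix (Fin m) (Fin n) ℝ) (hB : B.rank ≤ k) :
    sv (A - B) ⟨0, hn⟩ ^ 2 +
      (∑ j ∈ Finset.univ.filter (fun j : Fin n => k + 1 ≤ (j : ℕ)), sv A j ^ 2)
      ≤ frobNorm (A - B) ^ 2 ∧
    specNorm (A - B) ^ 2 ≤ frobNorm (A - B) ^ 2 -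
      ∑ j ∈ Finset.univ.filter (fun j : Fin n => k + 1 ≤ (j : ℕ)), sv A j ^ 2 :=
  stmt11_general hn A B hB
end
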